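/- Let v be a real number. Then Re z₋(v) < 0 < Re z₊(v) and Im z₋(v) < 0 < Im z₊(v); moreover, if v > 0, then |z₊(v)| < 1 < |z₋(v)|. -/

import Mathlib

open Filter Asymptotics MeasureTheory

noncomputable section

/-- The open interval of real numbers between the extended reals `ξmin` and `ξmax`. -/
def domS (ξmin ξmax : EReal) : Set ℝ := {ξ : ℝ | ξmin < (ξ : EReal) ∧ (ξ : EReal) < ξmax}

/-- `(a, κ, q)` is a solution of system (S) with parameters `v`, `ω` on the set `s`. -/
def IsSolS (v ω : ℝ) (a κ q : ℝ → ℝ) (s : Set ℝ) : Prop :=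
  ∀ ξ ∈ s,
    HasDerivAt a (κ ξ * a ξ) ξ ∧
    HasDerivAt κ (-v * κ ξ - (κ ξ) ^ 2 + (q ξ) ^ 2) ξ ∧
    HasDerivAt q (ω - (a ξ) ^ 2 - v * q ξ - 2 * q ξ * κ ξ) ξ

/-- `(a, κ, q)` is a maximal solution of system (S) on the open interval `(ξmin, ξmax)`:
it cannot be extended to a solution on a strictly larger open interval. -/
def IsMaximalSolS (v ω : ℝ) (a κ q : ℝ → ℝ) (ξmin ξmax : EReal) : Prop :=
  ξmin < ξmax ∧
  IsSolS v ω a κ q (domS ξmin ξmax) ∧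
  ∀ ξmin' ξmax' : EReal, ∀ a' κ' q' : ℝ → ℝ,
    ξmin' ≤ ξmin → ξmax ≤ ξmax' →
    IsSolS v ω a' κ' q' (domS ξmin' ξmax') →
    (∀ ξ ∈ domS ξmin ξmax, a' ξ = a ξ ∧ κ' ξ = κ ξ ∧ q' ξ = q ξ) →
    ξmin' = ξmin ∧ ξmax' = ξmax

/-- The filter of real numbers tending to the extended real `c` from the left. -/
def leftLimF (c : EReal) : Filter ℝ :=
  Filter.comap (fun x : ℝ => (x : EReal)) (nhdsWithin c (Set.Iio c))

/-- The filter of real numbers tending to the extended real `c` from the right. -/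
def rightLimF (c : EReal) : Filter ℝ :=
  Filter.comap (fun x : ℝ => (x : EReal)) (nhdsWithin c (Set.Ioi c))

/-- `B` (with derivative `B'`) is a solution of the second order ODE (E) on the set `s`. -/
def IsSolE (v ω : ℝ) (B B' : ℝ → ℂ) (s : Set ℝ) : Prop :=
  ∀ ξ ∈ s,
    HasDerivAt B (B' ξ) ξ ∧
    HasDerivAt B'
      (-(v : ℂ) * B' ξ + Complex.I * (ω : ℂ) * B ξ
        - Complex.I * ((‖B ξ‖ : ℝ) : ℂ) ^ 2 * B ξ) ξ

/-- `B` (with derivative `B'`) is a maximal solution of (E) on the open interval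
`(ξmin, ξmax)`. -/
def IsMaximalSolE (v ω : ℝ) (B B' : ℝ → ℂ) (ξmin ξmax : EReal) : Prop :=
  ξmin < ξmax ∧
  IsSolE v ω B B' (domS ξmin ξmax) ∧
  ∀ ξmin' ξmax' : EReal, ∀ C C' : ℝ → ℂ,
    ξmin' ≤ ξmin → ξmax ≤ ξmax' →
    IsSolE v ω C C' (domS ξmin' ξmax') →
    (∀ ξ ∈ domS ξmin ξmax, C ξ = B ξ ∧ C' ξ = B' ξ) →
    ξmin' = ξmin ∧ ξmax' = ξmax

/-- `α(v)`: the real part of the square root of `v² + 4i` with positive real part. -/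
def alphaS (v : ℝ) : ℝ := Real.sqrt ((v ^ 2 + Real.sqrt (v ^ 4 + 16)) / 2)

/-- `β(v)`: the imaginary part of the square root of `v² + 4i` with positive real part. -/
def betaS (v : ℝ) : ℝ := 2 / alphaS v

/-- `z₊(v) = (-v + α + iβ)/2`, the root of `z² + vz - i = 0` with positive real part. -/
def zplus (v : ℝ) : ℂ := (-(v : ℂ) + (alphaS v : ℂ) + (betaS v : ℂ) * Complex.I) / 2

/-- `z₋(v) = (-v - α - iβ)/2`, the root of `z² + vz - i = 0` with negative real part. -/
def zminus (v : ℝ) : ℂ := (-(v : ℂ) - (alphaS v : ℂ) - (betaS v : ℂ) * Complex.I) / 2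

/-- Signs and moduli of the equilibria `z₋(v)` and `z₊(v)` of `dz/dξ = i - vz - z²`:
`Re z₋ < 0 < Re z₊`, `Im z₋ < 0 < Im z₊`, and for `v > 0`, `|z₊| < 1 < |z₋|`. -/
theorem equilibria_signs_and_moduli (v : ℝ) :
    (zminus v).re < 0 ∧ 0 < (zplus v).re ∧
    (zminus v).im < 0 ∧ 0 < (zplus v).im ∧
    (0 < v → ‖zplus v‖ < 1 ∧ 1 < ‖zminus v‖) := by
  set s := Real.sqrt (v ^ 4 + 16) with hs_def
  have hs4 : (4:ℝ) ≤ s := by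
    rw [hs_def, show (4:ℝ) = Real.sqrt 16 by
      rw [show (16:ℝ) = 4^2 by norm_num, Real.sqrt_sq (by norm_num)]]
    exact Real.sqrt_le_sqrt (by nlinarith [sq_nonneg (v^2)])
  have hs2 : s ^ 2 = v ^ 4 + 16 := Real.sq_sqrt (by positivity)
  set α := alphaS v with hα_def
  have ha2 : α ^ 2 = (v ^ 2 + s) / 2 := by
    rw [hα_def, alphaS, ← hs_def, Real.sq_sqrt (by nlinarith [sq_nonneg v])]
  have hα0 : 0 < α := by
    rw [hα_def, alphaS, ← hs_def]
    exact Real.sqrt_pos.2 (by nlinarith [sq_nonneg v])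
  have ha2' : (2:ℝ) ≤ α ^ 2 := by nlinarith [sq_nonneg v]
  set β := betaS v with hβ_def
  have hb : α * β = 2 := by
    rw [hβ_def, betaS, ← hα_def]; field_simp
  have hβ0 : 0 < β := by nlinarith
  have hvab : α ^ 2 - β ^ 2 = v ^ 2 := by
    have h4 : α ^ 2 * β ^ 2 = 4 := by nlinarith
    have key : (α ^ 2 - β ^ 2 - v ^ 2) * α ^ 2 = 0 := by nlinarith
    rcases mul_eq_zero.1 key with h | h
    · linarith
    · exact absurd h (by positivity)
  have hv1 : v < α := by nlinarith [sq_nonneg (α + v), sq_nonneg (α - v)]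
  have hv2 : -v < α := by nlinarith [sq_nonneg (α + v), sq_nonneg (α - v)]
  have hrem : (zminus v).re = (-v - α) / 2 := by
    simp [zminus, ← hα_def, ← hβ_def, Complex.div_re, Complex.normSq]
  have hrep : (zplus v).re = (-v + α) / 2 := by
    simp [zplus, ← hα_def, ← hβ_def, Complex.div_re, Complex.normSq]
  have himm : (zminus v).im = -β / 2 := by
    simp [zminus, ← hα_def, ← hβ_def, Complex.div_im, Complex.normSq]
  have himp : (zplus v).im = β / 2 := by
    simp [zplus, ← hα_def, ← hβ_def, Complex.div_im, Complex.normSq]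
  refine ⟨by rw [hrem]; linarith, by rw [hrep]; linarith,
    by rw [himm]; linarith, by rw [himp]; linarith, fun hv => ?_⟩
  -- key inequality: β < α + v, hence α² − αv < 2 < α² + αv
  have hβav : β < α + v := by nlinarith
  have hαvβ : α < v + β := by nlinarith [mul_pos hv hβ0]
  have hprod1 : (α ^ 2 - α * v - 2) * (α + v) = 2 * (β - α - v) := by
    linear_combination α * hvab + β * hb
  have hprod2 : (α ^ 2 + α * v - 2) * (α - v) = 2 * (v + β - α) := by
    linear_combination α * hvab + β * hb
  have hkey1 : α ^ 2 - α * v < 2 := by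
    by_contra h
    push_neg at h
    have h2 := mul_nonneg (by linarith : (0:ℝ) ≤ α ^ 2 - α * v - 2)
      (by linarith : (0:ℝ) ≤ α + v)
    rw [hprod1] at h2
    linarith
  have hkey2 : 2 < α ^ 2 + α * v := by
    by_contra h
    push_neg at h
    have h2 := mul_nonpos_of_nonpos_of_nonneg
      (by linarith : α ^ 2 + α * v - 2 ≤ (0:ℝ)) (by linarith : (0:ℝ) ≤ α - v)
    rw [hprod2] at h2
    linarith
  have hsqp : (‖zplus v‖) ^ 2 = (α ^ 2 - α * v) / 2 := by
    rw [Complex.sq_norm, Complex.normSq_apply, hrep, himp]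
    linear_combination (-1/4 : ℝ) * hvab
  have hsqm : (‖zminus v‖) ^ 2 = (α ^ 2 + α * v) / 2 := by
    rw [Complex.sq_norm, Complex.normSq_apply, hrem, himm]
    linear_combination (-1/4 : ℝ) * hvab
  have habsp : (‖zplus v‖) ^ 2 < 1 := by rw [hsqp]; linarith
  have habsm : 1 < (‖zminus v‖) ^ 2 := by rw [hsqm]; linarith
  exact ⟨(pow_lt_one_iff_of_nonneg (norm_nonneg _) two_ne_zero).1 habsp,
    (one_lt_pow_iff_of_nonneg (norm_nonneg _) two_ne_zero).1 habsm⟩
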